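/- arXiv:1206.3177 — 6 statements merged into one kernel-verified Lean document; each statement's English description precedes it below -/
import Mathlib

section
/- For every n ≥ 0, the D-iteration state vectors satisfy the invariant H_n + F_n = P·H_n + B. -/
/-!
Step `n + 1` moves the fluid `d = J_{i (n+1)} F_n` from `F` into the history `H` and adds `P d`
back to `F`, so `H + F - P H` changes by `d - d + P d - P d = 0` and stays equal to `F_0 = B`.
-/

open Matrix

/-- The matrix `J_k`: all entries zero except the `k`-th diagonal entry, equal to 1. -/
noncomputable def Jmat {N : ℕ} (k : Fin N) : Matrix (Fin N) (Fin N) ℝ :=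
  Matrix.single k k 1

/-- Residual fluid of the D-iteration: `F 0 = B`,
`F n = (I - J_{i n} + P * J_{i n}) *ᵥ F (n-1)`. -/
noncomputable def Fvec {N : ℕ} (P : Matrix (Fin N) (Fin N) ℝ) (B : Fin N → ℝ)
    (i : ℕ → Fin N) : ℕ → (Fin N → ℝ)
  | 0 => B
  | n + 1 =>
      ((1 : Matrix (Fin N) (Fin N) ℝ) - Jmat (i (n + 1)) + P * Jmat (i (n + 1))) *ᵥ
        Fvec P B i n

/-- History of the D-iteration: `H n = ∑_{k=1}^n J_{i k} *ᵥ F (k-1)`. -/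
noncomputable def Hvec {N : ℕ} (P : Matrix (Fin N) (Fin N) ℝ) (B : Fin N → ℝ)
    (i : ℕ → Fin N) (n : ℕ) : Fin N → ℝ :=
  ∑ k ∈ Finset.range n, (Jmat (i (k + 1))) *ᵥ Fvec P B i k

section DIteration

variable {N : ℕ} (P : Matrix (Fin N) (Fin N) ℝ) (B : Fin N → ℝ) (i : ℕ → Fin N)

@[simp]
theorem Hvec_zero : Hvec P B i 0 = 0 := Finset.sum_range_zero _

theorem Hvec_succ (n : ℕ) :
    Hvec P B i (n + 1) = Hvec P B i n + Jmat (i (n + 1)) *ᵥ Fvec P B i n :=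
  Finset.sum_range_succ _ n

theorem Fvec_succ (n : ℕ) :
    Fvec P B i (n + 1) = Fvec P B i n - Jmat (i (n + 1)) *ᵥ Fvec P B i n +
      P *ᵥ (Jmat (i (n + 1)) *ᵥ Fvec P B i n) := by
  rw [Fvec, add_mulVec, sub_mulVec, one_mulVec, mulVec_mulVec]

end DIteration

theorem statement0_general {N : ℕ} (P : Matrix (Fin N) (Fin N) ℝ)
    (B : Fin N → ℝ) (i : ℕ → Fin N) (n : ℕ) :
    Hvec P B i n + Fvec P B i n = P *ᵥ Hvec P B i n + B := by
  induction n with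
  | zero => simp [Fvec]
  | succ n ih =>
    rw [Hvec_succ, Fvec_succ, mulVec_add]
    linear_combination (norm := module) ih

/-- for every `n ≥ 0`, `H n + F n = P ⬝ H n + B`. -/
theorem statement0 {N : ℕ} (hN : 1 ≤ N) (P : Matrix (Fin N) (Fin N) ℝ)
    (B : Fin N → ℝ) (i : ℕ → Fin N) (n : ℕ) :
    Hvec P B i n + Fvec P B i n = P *ᵥ Hvec P B i n + B :=
  statement0_general P B i n
end

section
/- Suppose P is column-stochastic. Fix n ≥ 0, let j = i_{n+1}, f = (F_n)_j, and let Δ = { i ∈ {1,…,N} : (F_n)_i · f < 0 } be the set of nodes whose fluid has sign opposite to f. Then the L1 norm after one diffusion step satisfies the exact identity |F_{n+1}| = |F_n| + Σ_{i∈Δ} ( |(F_n)_i + f·p_{ij}| − |(F_n)_i| − |f|·p_{ij} ). -/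
/-!
One diffusion step empties node `j` and adds `f * p_{aj}` to every node `a`. Wherever
`(F_n)_a` does not have the sign opposite to `f`, the two summands have the same sign and
`|(F_n)_a + f p_{aj}| = |(F_n)_a| + |f| p_{aj}`; since column `j` of `P` sums to one, these added
amounts total `|f|`, exactly the mass removed from node `j`, so only the corrections on `Δ` remain.
-/

open Matrix

theorem abs_add_mul_of_mul_nonneg {x c p : ℝ} (hxc : 0 ≤ x * c) (hp : 0 ≤ p) :
    |x + c * p| = |x| + |c| * p := by
  rcases mul_nonneg_iff.1 hxc with ⟨hx, hc⟩ | ⟨hx, hc⟩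
  · rw [abs_of_nonneg hx, abs_of_nonneg hc, abs_of_nonneg (by positivity)]
  · rw [abs_of_nonpos hx, abs_of_nonpos hc,
      abs_of_nonpos (add_nonpos hx (mul_nonpos_of_nonpos_of_nonneg hc hp))]
    ring

theorem sum_abs_add_mul_eq {ι : Type*} [Fintype ι] (x p : ι → ℝ) (c : ℝ)
    (hp : ∀ a, 0 ≤ p a) :
    ∑ a, |x a + c * p a| = ∑ a, |x a| + |c| * ∑ a, p a +
      ∑ a ∈ Finset.univ.filter (fun a => x a * c < 0),
        (|x a + c * p a| - |x a| - |c| * p a) := by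
  rw [Finset.sum_filter_of_ne fun a _ h => ?_, Finset.mul_sum, ← Finset.sum_add_distrib,
    ← Finset.sum_add_distrib]
  · exact Finset.sum_congr rfl fun a _ => by ring
  · by_contra hxc
    rw [abs_add_mul_of_mul_nonneg (not_lt.1 hxc) (hp a)] at h
    exact h (by ring)

theorem sum_abs_update_zero {ι : Type*} [Fintype ι] [DecidableEq ι] (g : ι → ℝ) (j : ι) :
    ∑ a, |Function.update g j 0 a| = ∑ a, |g a| - |g j| := by
  rw [← Finset.sum_erase_add _ _ (Finset.mem_univ j),
    ← Finset.sum_erase_add _ _ (Finset.mem_univ j)]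
  simp only [Function.update_self, abs_zero, add_zero, add_sub_cancel_right]
  exact Finset.sum_congr rfl fun a ha => by rw [Function.update_of_ne (Finset.ne_of_mem_erase ha)]

theorem Fvec_succ_apply {N : ℕ} (P : Matrix (Fin N) (Fin N) ℝ) (B : Fin N → ℝ)
    (i : ℕ → Fin N) (n : ℕ) (a : Fin N) :
    Fvec P B i (n + 1) a =
      Function.update (Fvec P B i n) (i (n + 1)) 0 a +
        Fvec P B i n (i (n + 1)) * P a (i (n + 1)) := by
  set j := i (n + 1)
  set g := Fvec P B i n
  have hJ : Jmat j *ᵥ g = Pi.single j (g j) := by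
    rw [Jmat, single_mulVec, one_mul]; rfl
  rw [Fvec, add_mulVec, sub_mulVec, one_mulVec, ← mulVec_mulVec, hJ, Pi.add_apply,
    Pi.sub_apply, mulVec_single, Pi.smul_apply, col_apply, op_smul_eq_mul, mul_comm (P a j)]
  rcases eq_or_ne a j with rfl | h <;> simp [g, *]

theorem sum_abs_update_zero_add_mul {ι : Type*} [Fintype ι] [DecidableEq ι] (g p : ι → ℝ)
    (j : ι) (hp : ∀ a, 0 ≤ p a) (hp_sum : ∑ a, p a = 1) :
    ∑ a, |Function.update g j 0 a + g j * p a| = ∑ a, |g a| +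
      ∑ a ∈ Finset.univ.filter (fun a => g a * g j < 0),
        (|g a + g j * p a| - |g a| - |g j| * p a) := by
  have hj : ¬ g j * g j < 0 := not_lt.2 (mul_self_nonneg _)
  have hΔ : Finset.univ.filter (fun a => Function.update g j 0 a * g j < 0) =
      Finset.univ.filter (fun a => g a * g j < 0) := by
    ext a
    rcases eq_or_ne a j with rfl | h <;> simp [*]
  rw [sum_abs_add_mul_eq _ _ _ hp, sum_abs_update_zero, hp_sum, mul_one, sub_add_cancel, hΔ]
  refine congrArg _ (Finset.sum_congr rfl fun a ha => ?_)
  have haj : a ≠ j := by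
    rintro rfl
    exact hj (Finset.mem_filter.1 ha).2
  rw [Function.update_of_ne haj]

theorem statement3_general {N : ℕ} (P : Matrix (Fin N) (Fin N) ℝ)
    (B : Fin N → ℝ) (i : ℕ → Fin N)
    (hPnn : ∀ a b, 0 ≤ P a b) (hPcol : ∀ b, ∑ a, P a b = 1) (n : ℕ) :
    (∑ a, |Fvec P B i (n + 1) a|) =
      (∑ a, |Fvec P B i n a|) +
        ∑ a ∈ Finset.univ.filter
            (fun a => Fvec P B i n a * Fvec P B i n (i (n + 1)) < 0),
          (|Fvec P B i n a + Fvec P B i n (i (n + 1)) * P a (i (n + 1))| -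
            |Fvec P B i n a| - |Fvec P B i n (i (n + 1))| * P a (i (n + 1))) := by
  simp only [Fvec_succ_apply]
  exact sum_abs_update_zero_add_mul _ _ _ (fun a => hPnn a _) (hPcol _)

/-- exact identity for the L1 norm after one diffusion step.
With `j = i (n+1)`, `f = (F n) j` and `Δ = {a : (F n) a * f < 0}`,
`|F (n+1)| = |F n| + ∑_{a ∈ Δ} (|(F n) a + f p_{a j}| - |(F n) a| - |f| p_{a j})`. -/
theorem statement3 {N : ℕ} (hN : 1 ≤ N) (P : Matrix (Fin N) (Fin N) ℝ)
    (B : Fin N → ℝ) (i : ℕ → Fin N)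
    (hPnn : ∀ a b, 0 ≤ P a b) (hPcol : ∀ b, ∑ a, P a b = 1) (n : ℕ) :
    (∑ a, |Fvec P B i (n + 1) a|) =
      (∑ a, |Fvec P B i n a|) +
        ∑ a ∈ Finset.univ.filter
            (fun a => Fvec P B i n a * Fvec P B i n (i (n + 1)) < 0),
          (|Fvec P B i n a + Fvec P B i n (i (n + 1)) * P a (i (n + 1))| -
            |Fvec P B i n a| - |Fvec P B i n (i (n + 1))| * P a (i (n + 1))) :=
  statement3_general P B i hPnn hPcol n
end

section
/- Suppose P is column-stochastic. Then the L1 norm of the residual fluid is non-increasing along the D-iteration: for every n ≥ 0, |F_{n+1}| ≤ |F_n|. -/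
/-!
A step of the D-iteration at node `k` removes the fluid `x = F_n k` from `k` and adds `x`
times column `k` of `P`. That column is nonnegative with sum one, so the added fluid has
L1 norm exactly `|x|`, and the triangle inequality shows the total cannot increase.
-/

open Matrix

theorem Matrix.one_sub_single_add_mul_single_mulVec {ι R : Type*} [Fintype ι] [DecidableEq ι]
    [CommRing R] (P : Matrix ι ι R) (f : ι → R) (k : ι) :
    (1 - single k k 1 + P * single k k 1) *ᵥ f = Function.update f k 0 + f k • P.col k := by
  rw [add_mulVec, sub_mulVec, ← mulVec_mulVec, one_mulVec, single_mulVec, one_mul,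
    ← Pi.single, mulVec_single]
  ext a
  by_cases h : a = k
  · subst h; simp [mul_comm]
  · simp [h, mul_comm]

theorem Fvec_succ_s4 {N : ℕ} (P : Matrix (Fin N) (Fin N) ℝ) (B : Fin N → ℝ) (i : ℕ → Fin N)
    (n : ℕ) :
    Fvec P B i (n + 1) =
      Function.update (Fvec P B i n) (i (n + 1)) 0 + Fvec P B i n (i (n + 1)) • P.col (i (n + 1)) :=
  one_sub_single_add_mul_single_mulVec P _ _

theorem sum_abs_update_zero_add_abs {ι : Type*} [Fintype ι] [DecidableEq ι] (f : ι → ℝ) (k : ι) :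
    ∑ a, |Function.update f k 0 a| + |f k| = ∑ a, |f a| := by
  simp_rw [Function.apply_update (fun _ => abs), abs_zero,
    Finset.sum_update_of_mem (Finset.mem_univ k), zero_add]
  exact (Finset.sum_eq_sum_sdiff_singleton_add (Finset.mem_univ k) _).symm

theorem sum_abs_add_smul_le_of_nonneg {ι : Type*} [Fintype ι] (g v : ι → ℝ) (c : ℝ)
    (hv : ∀ a, 0 ≤ v a) :
    ∑ a, |(g + c • v) a| ≤ ∑ a, |g a| + |c| * ∑ a, v a := by
  rw [Finset.mul_sum, ← Finset.sum_add_distrib]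
  gcongr with a
  calc |g a + c * v a| ≤ |g a| + |c * v a| := abs_add_le _ _
    _ = |g a| + |c| * v a := by rw [abs_mul, abs_of_nonneg (hv a)]

theorem sum_abs_update_zero_add_smul_le {ι : Type*} [Fintype ι] [DecidableEq ι]
    (f v : ι → ℝ) (k : ι) (hv : ∀ a, 0 ≤ v a) (hv_sum : ∑ a, v a = 1) :
    ∑ a, |(Function.update f k 0 + f k • v) a| ≤ ∑ a, |f a| :=
  calc ∑ a, |(Function.update f k 0 + f k • v) a|
      ≤ ∑ a, |Function.update f k 0 a| + |f k| * ∑ a, v a :=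
        sum_abs_add_smul_le_of_nonneg _ _ _ hv
    _ = ∑ a, |f a| := by rw [hv_sum, mul_one, sum_abs_update_zero_add_abs]

theorem statement4_general {N : ℕ} (P : Matrix (Fin N) (Fin N) ℝ)
    (B : Fin N → ℝ) (i : ℕ → Fin N)
    (hPnn : ∀ a b, 0 ≤ P a b) (hPcol : ∀ b, ∑ a, P a b = 1) (n : ℕ) :
    (∑ a, |Fvec P B i (n + 1) a|) ≤ ∑ a, |Fvec P B i n a| := by
  rw [Fvec_succ_s4]
  exact sum_abs_update_zero_add_smul_le _ _ _ (fun a => hPnn a _) (hPcol _)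

/-- if `P` is column-stochastic, the L1 norm of the residual fluid
is non-increasing: `|F (n+1)| ≤ |F n|` for every `n ≥ 0`. -/
theorem statement4 {N : ℕ} (hN : 1 ≤ N) (P : Matrix (Fin N) (Fin N) ℝ)
    (B : Fin N → ℝ) (i : ℕ → Fin N)
    (hPnn : ∀ a b, 0 ≤ P a b) (hPcol : ∀ b, ∑ a, P a b = 1) (n : ℕ) :
    (∑ a, |Fvec P B i (n + 1) a|) ≤ ∑ a, |Fvec P B i n a| :=
  statement4_general P B i hPnn hPcol n
end

section
/- Suppose P is column-stochastic and irreducible. Then there exists a constant w > 0 (depending only on P) such that for every vector F ∈ ℝ^N with σ(F) = 0 and F ≠ 0, there exists a finite sequence of at most N diffusion steps starting from F after which the resulting residual vector F′ satisfies |F′| ≤ |F| − w·max_i |F_i|; in particular |F′| ≤ (1 − w/N)·|F|. -/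
/-!
A diffusion step at `j` keeps `F` off `j` and spreads `F j` along the column `P · j`, so by the
triangle inequality it never increases `|F|`, and it decreases `|F|` strictly as soon as it pushes
mass onto an entry of the opposite sign. If `σ(F) = 0` and `F ≠ 0`, pick `F a > 0 > F b` and a
walk from `a` to `b` of length `< N` along positive entries of `P`. Diffusing along the walk either
loses mass at some step or carries positive mass all the way to `b` while leaving `F b < 0`
untouched, which is absurd; so some schedule of `N` steps contracts `F` strictly. The contracted
norm is continuous and homogeneous in `F`, so compactness of the unit `L¹`-sphere of `{σ = 0}`
gives a uniform factor `c < 1`, and `w = 1 - c` works because `max |F i| ≤ |F|` and `w / N ≤ w`.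
-/

open Matrix

/-- `diffuse P seq m F` is the result of applying `m` diffusion steps to `F`,
at the nodes `seq 0, …, seq (m-1)`. -/
noncomputable def diffuse {N : ℕ} (P : Matrix (Fin N) (Fin N) ℝ) (seq : ℕ → Fin N) :
    ℕ → (Fin N → ℝ) → (Fin N → ℝ)
  | 0, F => F
  | m + 1, F =>
      ((1 : Matrix (Fin N) (Fin N) ℝ) - Jmat (seq m) + P * Jmat (seq m)) *ᵥ
        diffuse P seq m F

section DiffusionStep

variable {ι : Type*} [DecidableEq ι]

def diffusionStep (P : Matrix ι ι ℝ) (j : ι) (G : ι → ℝ) : ι → ℝ :=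
  fun i => Function.update G j 0 i + P i j * G j

variable {P : Matrix ι ι ℝ}

lemma abs_diffusionStep_le (hP : ∀ i j, 0 ≤ P i j) (j : ι) (G : ι → ℝ) (i : ι) :
    |diffusionStep P j G i| ≤ |Function.update G j 0 i| + P i j * |G j| := by
  calc |diffusionStep P j G i| ≤ |Function.update G j 0 i| + |P i j * G j| := abs_add_le _ _
    _ = |Function.update G j 0 i| + P i j * |G j| := by rw [abs_mul, abs_of_nonneg (hP i j)]

variable [Fintype ι]

lemma sum_abs_update_zero_add_abs_s6 (G : ι → ℝ) (j : ι) :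
    ∑ i, |Function.update G j 0 i| + |G j| = ∑ i, |G i| := by
  rw [Fintype.sum_eq_add_sum_compl j, Fintype.sum_eq_add_sum_compl j fun i => |G i|,
    Function.update_self, abs_zero, zero_add, add_comm]
  congr 1
  exact Finset.sum_congr rfl fun i hi => by
    rw [Function.update_of_ne (Finset.mem_compl.1 hi ∘ Finset.mem_singleton.2)]

lemma sum_diffusionStep_majorant (hPcol : ∀ j, ∑ i, P i j = 1) (j : ι) (G : ι → ℝ) :
    ∑ i, (|Function.update G j 0 i| + P i j * |G j|) = ∑ i, |G i| := by
  rw [Finset.sum_add_distrib, ← Finset.sum_mul, hPcol, one_mul, sum_abs_update_zero_add_abs_s6]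

lemma sum_abs_diffusionStep_le (hP : ∀ i j, 0 ≤ P i j) (hPcol : ∀ j, ∑ i, P i j = 1)
    (j : ι) (G : ι → ℝ) : ∑ i, |diffusionStep P j G i| ≤ ∑ i, |G i| :=
  (Finset.sum_le_sum fun i _ => abs_diffusionStep_le hP j G i).trans_eq
    (sum_diffusionStep_majorant hPcol j G)

lemma sum_abs_diffusionStep_lt (hP : ∀ i j, 0 ≤ P i j) (hPcol : ∀ j, ∑ i, P i j = 1)
    {j b : ι} {G : ι → ℝ} (hbj : b ≠ j) (hPbj : 0 < P b j) (hsign : G b * G j < 0) :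
    ∑ i, |diffusionStep P j G i| < ∑ i, |G i| := by
  refine (Finset.sum_lt_sum (fun i _ => abs_diffusionStep_le hP j G i)
    ⟨b, Finset.mem_univ b, ?_⟩).trans_eq (sum_diffusionStep_majorant hPcol j G)
  rw [diffusionStep, Function.update_of_ne hbj]
  have hopp : G b * (P b j * G j) < 0 := by
    rw [mul_left_comm]
    exact mul_neg_of_pos_of_neg hPbj hsign
  have hy : |P b j * G j| = P b j * |G j| := by rw [abs_mul, abs_of_pos hPbj]
  rw [← hy]
  refine (abs_add_le (G b) (P b j * G j)).lt_of_ne fun heq => ?_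
  rcases (abs_add_eq_add_abs_iff _ _).1 heq with ⟨h1, h2⟩ | ⟨h1, h2⟩ <;> nlinarith

lemma diffusionStep_pos_of_not_lt (hP : ∀ i j, 0 ≤ P i j) (hPcol : ∀ j, ∑ i, P i j = 1)
    {i j : ι} {G : ι → ℝ} (hj : 0 < G j) (hij : 0 < P i j)
    (h : ¬ ∑ k, |diffusionStep P j G k| < ∑ k, |G k|) : 0 < diffusionStep P j G i := by
  by_cases hi : i = j
  · subst hi
    simpa [diffusionStep] using mul_pos hij hj
  · have hGi : 0 ≤ G i := by
      by_contra! hneg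
      exact h (sum_abs_diffusionStep_lt hP hPcol hi hij (mul_neg_of_neg_of_pos hneg hj))
    rw [diffusionStep, Function.update_of_ne hi]
    positivity

lemma diffusionStep_apply_of_not_lt (hP : ∀ i j, 0 ≤ P i j) (hPcol : ∀ j, ∑ i, P i j = 1)
    {j b : ι} {G : ι → ℝ} (hj : 0 < G j) (hb : G b < 0)
    (h : ¬ ∑ k, |diffusionStep P j G k| < ∑ k, |G k|) : diffusionStep P j G b = G b := by
  have hbj : b ≠ j := by rintro rfl; linarith
  have hPbj : P b j = 0 := by
    by_contra! hne
    exact h (sum_abs_diffusionStep_lt hP hPcol hbj ((hP b j).lt_of_ne' hne)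
      (mul_neg_of_neg_of_pos hb hj))
  rw [diffusionStep, Function.update_of_ne hbj, hPbj, zero_mul, add_zero]

end DiffusionStep

lemma mulVec_eq_diffusionStep {N : ℕ} (P : Matrix (Fin N) (Fin N) ℝ) (j : Fin N)
    (G : Fin N → ℝ) :
    ((1 : Matrix (Fin N) (Fin N) ℝ) - Jmat j + P * Jmat j) *ᵥ G = diffusionStep P j G := by
  ext i
  rw [add_mulVec, sub_mulVec, one_mulVec, ← mulVec_mulVec, Jmat, single_mulVec]
  by_cases hij : i = j
  · subst hij; simp [diffusionStep, mulVec, dotProduct, Function.update_apply]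
  · simp [diffusionStep, mulVec, dotProduct, Function.update_apply, hij]

section Walk

variable {ι : Type*} {P : Matrix ι ι ℝ}

/-- Edges run from column to row: a diffusion step at `w k` moves mass on to `w (k + 1)`. -/
structure IsWalk (P : Matrix ι ι ℝ) (a b : ι) (w : ℕ → ι) (n : ℕ) : Prop where
  start : w 0 = a
  finish : w n = b
  pos : ∀ k < n, 0 < P (w (k + 1)) (w k)

lemma exists_isWalk_of_pow_pos [Fintype ι] [DecidableEq ι] (hP : ∀ i j, 0 ≤ P i j) {a : ι} :
    ∀ {n : ℕ} {b : ι}, 0 < (P ^ n) b a → ∃ w, IsWalk P a b w n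
  | 0, b, h => by
    obtain rfl : b = a := by
      by_contra hba
      simp [Matrix.one_apply_ne hba] at h
    exact ⟨fun _ => b, rfl, rfl, by simp⟩
  | n + 1, b, h => by
    rw [pow_succ', Matrix.mul_apply] at h
    obtain ⟨c, -, hc⟩ := Finset.exists_lt_of_sum_lt (Finset.sum_const_zero.trans_lt h)
    obtain ⟨hbc, hca⟩ := (pos_and_pos_or_neg_and_neg_of_mul_pos hc).resolve_right
      fun h => (hP b c).not_gt h.1
    obtain ⟨w, hw⟩ := exists_isWalk_of_pow_pos hP hca
    refine ⟨Function.update w (n + 1) b, ?_, Function.update_self .., fun k hk => ?_⟩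
    · rw [Function.update_of_ne (Nat.succ_ne_zero n).symm, hw.start]
    · rw [Function.update_of_ne (by omega : k ≠ n + 1)]
      rcases (Nat.lt_succ_iff_lt_or_eq.1 hk) with hk | rfl
      · rw [Function.update_of_ne (by omega : k + 1 ≠ n + 1)]
        exact hw.pos k hk
      · rw [Function.update_self, hw.finish]
        exact hbc

lemma IsWalk.splice {a b : ι} {w : ℕ → ι} {n i j : ℕ} (hw : IsWalk P a b w n) (hij : i < j)
    (hjn : j ≤ n) (hwij : w i = w j) :
    IsWalk P a b (fun k => if k ≤ i then w k else w (k + (j - i))) (n - (j - i)) where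
  start := by simpa using hw.start
  finish := by
    split_ifs with h
    · rw [show n - (j - i) = i by omega, hwij, show j = n by omega, hw.finish]
    · rw [Nat.sub_add_cancel (by omega), hw.finish]
  pos k hk := by
    rcases lt_trichotomy k i with hki | rfl | hki
    · rw [if_pos hki.le, if_pos (by omega : k + 1 ≤ i)]
      exact hw.pos k (by omega)
    · rw [if_pos le_rfl, if_neg (by omega), hwij, show k + 1 + (j - k) = j + 1 by omega]
      exact hw.pos j (by omega)
    · rw [if_neg (by omega), if_neg (by omega), show k + 1 + (j - i) = k + (j - i) + 1 by omega]
      exact hw.pos _ (by omega)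

lemma IsWalk.exists_length_lt_card [Fintype ι] {a b : ι} {w : ℕ → ι} {n : ℕ}
    (hw : IsWalk P a b w n) : ∃ w' n', n' < Fintype.card ι ∧ IsWalk P a b w' n' := by
  induction n using Nat.strong_induction_on generalizing w with
  | _ n ih =>
    by_cases hn : n < Fintype.card ι
    · exact ⟨w, n, hn, hw⟩
    obtain ⟨i, j, hne, hwij⟩ :=
      Fintype.exists_ne_map_eq_of_card_lt (fun k : Fin (n + 1) => w k) (by simp; omega)
    rcases Nat.lt_or_gt_of_ne (Fin.val_ne_of_ne hne) with h | h
    · exact ih _ (by omega) (hw.splice h (by omega) hwij)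
    · exact ih _ (by omega) (hw.splice h (by omega) hwij.symm)

end Walk

section Diffuse

variable {N : ℕ} {P : Matrix (Fin N) (Fin N) ℝ}

lemma diffuse_succ (P : Matrix (Fin N) (Fin N) ℝ) (seq : ℕ → Fin N) (m : ℕ) (F : Fin N → ℝ) :
    diffuse P seq (m + 1) F = diffusionStep P (seq m) (diffuse P seq m F) :=
  mulVec_eq_diffusionStep P (seq m) _

lemma diffuse_smul (P : Matrix (Fin N) (Fin N) ℝ) (seq : ℕ → Fin N) (m : ℕ) (t : ℝ)
    (F : Fin N → ℝ) : diffuse P seq m (t • F) = t • diffuse P seq m F := by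
  induction m with
  | zero => rfl
  | succ m ih => exact (congrArg _ ih).trans (mulVec_smul _ t _)

lemma continuous_diffuse (P : Matrix (Fin N) (Fin N) ℝ) (seq : ℕ → Fin N) (m : ℕ) :
    Continuous (diffuse P seq m) := by
  induction m with
  | zero => exact continuous_id
  | succ m ih => exact continuous_const.matrix_mulVec ih

lemma sum_abs_diffuse_antitone (hP : ∀ i j, 0 ≤ P i j) (hPcol : ∀ j, ∑ i, P i j = 1)
    (seq : ℕ → Fin N) (F : Fin N → ℝ) : Antitone fun m => ∑ i, |diffuse P seq m F i| :=
  antitone_nat_of_succ_le fun m => by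
    rw [diffuse_succ]
    exact sum_abs_diffusionStep_le hP hPcol _ _

lemma sum_abs_diffuse_lt_of_isWalk (hP : ∀ i j, 0 ≤ P i j) (hPcol : ∀ j, ∑ i, P i j = 1)
    {F : Fin N → ℝ} {a b : Fin N} {w : ℕ → Fin N} {n : ℕ} (hw : IsWalk P a b w n)
    (ha : 0 < F a) (hb : F b < 0) : ∑ i, |diffuse P w n F i| < ∑ i, |F i| := by
  -- Until some step loses mass, the mass at the current vertex stays positive and `F b` is
  -- never touched.
  have key : ∀ m ≤ n, ∑ i, |diffuse P w m F i| < ∑ i, |F i| ∨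
      (0 < diffuse P w m F (w m) ∧ diffuse P w m F b < 0) := by
    intro m hm
    induction m with
    | zero => exact Or.inr ⟨hw.start ▸ ha, hb⟩
    | succ m ih =>
      rw [diffuse_succ]
      set G := diffuse P w m F
      rcases ih (by omega) with hlt | ⟨hpos, hneg⟩
      · exact Or.inl ((sum_abs_diffusionStep_le hP hPcol _ G).trans_lt hlt)
      by_cases hstep : ∑ i, |diffusionStep P (w m) G i| < ∑ i, |G i|
      · exact Or.inl (hstep.trans_le (sum_abs_diffuse_antitone hP hPcol w F (Nat.zero_le m)))
      · exact Or.inr ⟨diffusionStep_pos_of_not_lt hP hPcol hpos (hw.pos m (by omega)) hstep,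
          (diffusionStep_apply_of_not_lt hP hPcol hpos hneg hstep).trans_lt hneg⟩
  rcases key n le_rfl with hlt | ⟨hpos, hneg⟩
  · exact hlt
  · rw [hw.finish] at hpos
    exact absurd hneg hpos.not_gt

lemma exists_pos_and_exists_neg_of_sum_eq_zero {ι : Type*} [Fintype ι] {F : ι → ℝ}
    (hsum : ∑ i, F i = 0) (hne : F ≠ 0) : (∃ a, 0 < F a) ∧ ∃ b, F b < 0 := by
  obtain ⟨c, hc⟩ := Function.ne_iff.1 hne
  obtain ⟨a, -, ha⟩ := Finset.exists_pos_of_sum_zero_of_exists_nonzero F hsum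
    ⟨c, Finset.mem_univ c, hc⟩
  obtain ⟨b, -, hb⟩ := Finset.exists_pos_of_sum_zero_of_exists_nonzero (-F)
    (by simp [hsum]) ⟨c, Finset.mem_univ c, by simpa using hc⟩
  exact ⟨⟨a, ha⟩, b, by simpa using hb⟩

lemma exists_sum_abs_diffuse_lt (hP : ∀ i j, 0 ≤ P i j) (hPcol : ∀ j, ∑ i, P i j = 1)
    (hirr : ∀ i j, ∃ n, 0 < (P ^ n) i j) {F : Fin N → ℝ} (hsum : ∑ i, F i = 0) (hne : F ≠ 0) :
    ∃ seq : ℕ → Fin N, ∑ i, |diffuse P seq N F i| < ∑ i, |F i| := by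
  obtain ⟨⟨a, ha⟩, b, hb⟩ := exists_pos_and_exists_neg_of_sum_eq_zero hsum hne
  obtain ⟨n, hn⟩ := hirr b a
  obtain ⟨w, hw⟩ := exists_isWalk_of_pow_pos hP hn
  obtain ⟨w', k, hk, hw'⟩ := hw.exists_length_lt_card
  rw [Fintype.card_fin] at hk
  exact ⟨w', (sum_abs_diffuse_antitone hP hPcol w' F hk.le).trans_lt
    (sum_abs_diffuse_lt_of_isWalk hP hPcol hw' ha hb)⟩

end Diffuse

lemma IsCompact.exists_lt_forall_exists_lt {X S : Type*} [TopologicalSpace X] {K : Set X}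
    (hK : IsCompact K) {f : S → X → ℝ} (hf : ∀ s, Continuous (f s)) {r : ℝ}
    (h : ∀ x ∈ K, ∃ s, f s x < r) : ∃ c < r, ∀ x ∈ K, ∃ s, f s x < c := by
  have : Nonempty {c : ℝ // c < r} := ⟨⟨r - 1, by linarith⟩⟩
  obtain ⟨⟨c, hc⟩, hKc⟩ :=
    hK.elim_directed_cover (fun c : {c // c < r} => ⋃ s, {x | f s x < c})
    (fun c => isOpen_iUnion fun s => isOpen_lt (hf s) continuous_const)
    (fun x hx => by
      obtain ⟨s, hs⟩ := h x hx
      exact Set.mem_iUnion.2 ⟨⟨(f s x + r) / 2, by linarith⟩,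
        Set.mem_iUnion.2 ⟨s, show f s x < (f s x + r) / 2 by linarith⟩⟩)
    (Monotone.directed_le fun c d hcd =>
      Set.iUnion_mono fun s x (hx : f s x < c) => hx.trans_le hcd)
  exact ⟨c, hc, fun x hx => by simpa using hKc hx⟩

section UniformContraction

variable {ι : Type*} [Fintype ι]

lemma sum_abs_smul (t : ℝ) (x : ι → ℝ) : ∑ i, |(t • x) i| = |t| * ∑ i, |x i| := by
  simp only [Pi.smul_apply, smul_eq_mul, abs_mul, Finset.mul_sum]

lemma sum_abs_pos {x : ι → ℝ} (hx : x ≠ 0) : 0 < ∑ i, |x i| := by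
  obtain ⟨i, hi⟩ := Function.ne_iff.1 hx
  exact Finset.sum_pos' (fun i _ => abs_nonneg (x i)) ⟨i, Finset.mem_univ i, abs_pos.2 hi⟩

lemma isCompact_inter_sum_abs_eq_one {C : Set (ι → ℝ)} (hC : IsClosed C) :
    IsCompact (C ∩ {x | ∑ i, |x i| = 1}) := by
  refine Metric.isCompact_of_isClosed_isBounded (hC.inter (isClosed_eq (by fun_prop)
    continuous_const)) ((Metric.isBounded_closedBall (x := 0) (r := 1)).subset fun x hx => ?_)
  rw [mem_closedBall_zero_iff, pi_norm_le_iff_of_nonneg zero_le_one]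
  intro i
  rw [Real.norm_eq_abs, ← hx.2]
  exact Finset.single_le_sum (fun i _ => abs_nonneg (x i)) (Finset.mem_univ i)

lemma exists_lt_one_forall_exists_le_mul_sum_abs {S : Type*} {C : Set (ι → ℝ)}
    (hC : IsClosed C) (hCsmul : ∀ x ∈ C, ∀ t : ℝ, 0 < t → t • x ∈ C) {f : S → (ι → ℝ) → ℝ}
    (hf : ∀ s, Continuous (f s)) (hfsmul : ∀ s x (t : ℝ), 0 < t → f s (t • x) = t * f s x)
    (h : ∀ x ∈ C, x ≠ 0 → ∃ s, f s x < ∑ i, |x i|) :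
    ∃ c < 1, ∀ x ∈ C, x ≠ 0 → ∃ s, f s x ≤ c * ∑ i, |x i| := by
  obtain ⟨c, hc1, hc⟩ := (isCompact_inter_sum_abs_eq_one hC).exists_lt_forall_exists_lt hf
    fun x hx => hx.2 ▸ h x hx.1 (by rintro rfl; simp at hx)
  refine ⟨c, hc1, fun x hx hx0 => ?_⟩
  have ht := sum_abs_pos hx0
  obtain ⟨s, hs⟩ := hc ((∑ i, |x i|)⁻¹ • x) ⟨hCsmul x hx _ (inv_pos.2 ht), by
    rw [Set.mem_ofPred_eq, sum_abs_smul, abs_of_pos (inv_pos.2 ht), inv_mul_cancel₀ ht.ne']⟩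
  refine ⟨s, ?_⟩
  calc f s x = (∑ i, |x i|) * f s ((∑ i, |x i|)⁻¹ • x) := by
        rw [← hfsmul s _ _ ht, smul_smul, mul_inv_cancel₀ ht.ne', one_smul]
    _ ≤ c * ∑ i, |x i| := by rw [mul_comm c]; exact mul_le_mul_of_nonneg_left hs.le ht.le

end UniformContraction

/-- if `P` is column-stochastic and irreducible, there is `w > 0` such
that from any nonzero `F` with `σ(F) = 0`, at most `N` diffusion steps reach `F'` with
`|F'| ≤ |F| - w * max_a |F a|`; in particular `|F'| ≤ (1 - w/N) * |F|`. -/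
theorem statement6 {N : ℕ} (hN : 0 < N) (P : Matrix (Fin N) (Fin N) ℝ)
    (hPnn : ∀ a b, 0 ≤ P a b) (hPcol : ∀ b, ∑ a, P a b = 1)
    (hirr : ∀ a b, ∃ n : ℕ, 1 ≤ n ∧ 0 < (P ^ n) a b) :
    ∃ w : ℝ, 0 < w ∧
      ∀ F : Fin N → ℝ, (∑ a, F a) = 0 → F ≠ 0 →
        ∃ (m : ℕ) (seq : ℕ → Fin N), m ≤ N ∧
          (∑ a, |diffuse P seq m F a|) ≤
              (∑ a, |F a|) -
                w * ((Finset.univ : Finset (Fin N)).sup'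
                  ⟨⟨0, hN⟩, Finset.mem_univ _⟩ fun a => |F a|) ∧
          (∑ a, |diffuse P seq m F a|) ≤ (1 - w / N) * (∑ a, |F a|) := by
  obtain ⟨c, hc1, hc⟩ := exists_lt_one_forall_exists_le_mul_sum_abs
    (C := {F : Fin N → ℝ | ∑ a, F a = 0}) (isClosed_eq (by fun_prop) continuous_const)
    (fun F hF t _ => by simp [← Finset.mul_sum, hF.out])
    (f := fun seq F => ∑ a, |diffuse P seq N F a|)
    (fun seq => continuous_finsetSum _ fun a _ =>
      ((continuous_apply a).comp (continuous_diffuse P seq N)).abs)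
    (fun seq F t ht => by simp only [diffuse_smul, sum_abs_smul, abs_of_pos ht])
    (fun F hF hne => exists_sum_abs_diffuse_lt hPnn hPcol (fun a b => (hirr a b).imp
      fun _ hn => hn.2) hF hne)
  refine ⟨1 - c, by linarith, fun F hsum hne => ?_⟩
  obtain ⟨seq, hseq⟩ := hc F hsum hne
  have hmax : (Finset.univ.sup' ⟨⟨0, hN⟩, Finset.mem_univ _⟩ fun a => |F a|) ≤ ∑ a, |F a| :=
    Finset.sup'_le _ _ fun a _ => Finset.single_le_sum (fun i _ => abs_nonneg (F i))
      (Finset.mem_univ a)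
  have hF : 0 ≤ ∑ a, |F a| := (sum_abs_pos hne).le
  have hw : (1 - c) / N ≤ 1 - c := div_le_self (by linarith) (by exact_mod_cast hN)
  exact ⟨N, seq, le_rfl, by nlinarith, by nlinarith⟩
end

section
/- Let P′ ∈ ℝ^{N×N} be a matrix with nonnegative entries and let V ∈ ℝ^N be a vector with all entries strictly positive such that Vᵀ·P′ = Vᵀ (V is a left eigenvector of P′ for eigenvalue 1). If σ_V(B) = 0, then for every n ≥ 0 the D-iteration applied to (P′, B) satisfies σ_V(F_n) = 0. -/
open Matrix

theorem vecMul_one_sub_add_mul_of_vecMul_eq_self {ι R : Type*} [Fintype ι] [DecidableEq ι]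
    [CommRing R] {V : ι → R} {P : Matrix ι ι R} (hVP : V ᵥ* P = V) (J : Matrix ι ι R) :
    V ᵥ* (1 - J + P * J) = V := by
  rw [vecMul_add, vecMul_sub, vecMul_one, ← vecMul_vecMul, hVP, sub_add_cancel]

theorem dotProduct_Fvec_of_vecMul_eq_self {N : ℕ} {P : Matrix (Fin N) (Fin N) ℝ}
    {V : Fin N → ℝ} (hVP : V ᵥ* P = V) (B : Fin N → ℝ) (i : ℕ → Fin N) (n : ℕ) :
    V ⬝ᵥ Fvec P B i n = V ⬝ᵥ B := by
  induction n with
  | zero => rfl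
  | succ n ih =>
    rw [Fvec, dotProduct_mulVec, vecMul_one_sub_add_mul_of_vecMul_eq_self hVP, ih]

theorem statement8_general {N : ℕ} (P' : Matrix (Fin N) (Fin N) ℝ)
    (B : Fin N → ℝ) (i : ℕ → Fin N) (V : Fin N → ℝ)
    (hVeig : ∀ b, ∑ a, V a * P' a b = V b)
    (hB : ∑ a, V a * B a = 0) (n : ℕ) :
    (∑ a, V a * Fvec P' B i n a) = 0 := by
  have hVP : V ᵥ* P' = V := funext hVeig
  exact (dotProduct_Fvec_of_vecMul_eq_self hVP B i n).trans hB

/-- if `P'` is nonnegative, `V` is strictly positive with `Vᵀ P' = Vᵀ`,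
and `σ_V(B) = 0`, then `σ_V(F n) = 0` for every `n ≥ 0`. -/
theorem statement8 {N : ℕ} (hN : 1 ≤ N) (P' : Matrix (Fin N) (Fin N) ℝ)
    (B : Fin N → ℝ) (i : ℕ → Fin N) (V : Fin N → ℝ)
    (hP'nn : ∀ a b, 0 ≤ P' a b) (hV : ∀ a, 0 < V a)
    (hVeig : ∀ b, ∑ a, V a * P' a b = V b)
    (hB : ∑ a, V a * B a = 0) (n : ℕ) :
    (∑ a, V a * Fvec P' B i n a) = 0 :=
  statement8_general P' B i V hVeig hB n
end

section
/- Let 0 < d < 1 and let P_g ∈ ℝ^{N×N} have nonnegative entries such that every column sum is either 1 or 0 (columns summing to 0 are the dangling nodes). Let \overline{P}_g be the column-stochastic completion of P_g obtained by replacing each zero column by e. Set f_1 = 1 − σ(P_g·e), F_0 = d·P_g·e − d·σ(P_g·e)·e, H = Σ_{i≥0} d^i·P_g^i·F_0, H′ = Σ_{i≥0} d^i·\overline{P}_g^i·F_0, f_2 = σ(H′ − P_g·H′), and f = f_1 + f_2. Then both series converge and H′ + e = ((1 − d + d·f)/(1 − d + d·f_1))·(H + e). -/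
/-!
Both `P_g` and its completion `P̄_g` have columns of absolute sum at most `1`, so `x ↦ d M x` is
an `ℓ¹` contraction for either matrix: the series `∑ dᵏ Mᵏ F₀` converge, their sums satisfy
`H = F₀ + d M H`, and `x ↦ x - d P_g x` is injective. The completion acts as
`P̄_g x = P_g x + σ(x - P_g x) e`, so `H'` solves the `P_g`-equation with the extra source
`d f₂ e`. Adding `e` absorbs `F₀`: both `H + e` and `H' + e` are mapped by `x ↦ x - d P_g x` to
multiples of `e`, namely `(1 - d + d f₁) e` and `(1 - d + d f) e`, and injectivity gives the claim.
-/

open Matrix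

namespace Matrix

section ContractionL1

variable {ι : Type*} [Fintype ι] (M : Matrix ι ι ℝ)

theorem sum_mulVec_eq_sum_mul_colSum (x : ι → ℝ) :
    ∑ i, (M *ᵥ x) i = ∑ j, (∑ i, M i j) * x j := by
  simp only [mulVec, dotProduct, Finset.sum_mul]
  exact Finset.sum_comm

variable {M}

theorem sum_abs_mulVec_le (hM : ∀ j, ∑ i, |M i j| ≤ 1) (x : ι → ℝ) :
    ∑ i, |(M *ᵥ x) i| ≤ ∑ i, |x i| :=
  calc ∑ i, |(M *ᵥ x) i| ≤ ∑ i, ∑ j, |M i j| * |x j| :=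
        Finset.sum_le_sum fun i _ => by
          simpa only [mulVec, dotProduct, abs_mul] using
            Finset.abs_sum_le_sum_abs (fun j => M i j * x j) Finset.univ
    _ = ∑ j, (∑ i, |M i j|) * |x j| := by simp only [Finset.sum_mul]; exact Finset.sum_comm
    _ ≤ ∑ j, |x j| :=
        Finset.sum_le_sum fun j _ => mul_le_of_le_one_left (abs_nonneg _) (hM j)

theorem eq_of_sub_smul_mulVec_eq {d : ℝ} (hd : |d| < 1) (hM : ∀ j, ∑ i, |M i j| ≤ 1)
    {x y : ι → ℝ} (hxy : x - d • (M *ᵥ x) = y - d • (M *ᵥ y)) : x = y := by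
  set z := x - y
  have hz : z = d • (M *ᵥ z) := by
    simp only [z, mulVec_sub, smul_sub]
    linear_combination (norm := module) hxy
  have hle : ∑ i, |z i| ≤ |d| * ∑ i, |z i| :=
    calc ∑ i, |z i| = |d| * ∑ i, |(M *ᵥ z) i| := by
          conv_lhs => rw [hz]
          simp only [Pi.smul_apply, smul_eq_mul, abs_mul, Finset.mul_sum]
      _ ≤ |d| * ∑ i, |z i| := mul_le_mul_of_nonneg_left (sum_abs_mulVec_le hM z) (abs_nonneg d)
  have hzero : ∑ i, |z i| = 0 := by
    have := Finset.sum_nonneg fun i (_ : i ∈ Finset.univ) => abs_nonneg (z i)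
    nlinarith
  have : z = 0 := funext fun i =>
    abs_eq_zero.mp ((Finset.sum_eq_zero_iff_of_nonneg fun j _ => abs_nonneg (z j)).mp hzero i
      (Finset.mem_univ i))
  exact sub_eq_zero.mp this

theorem eq_div_smul_of_sub_smul_mulVec_eq {d : ℝ} (hd : |d| < 1) (hM : ∀ j, ∑ i, |M i j| ≤ 1)
    {u x y : ι → ℝ} {a b : ℝ} (ha : a ≠ 0) (hx : x - d • (M *ᵥ x) = a • u)
    (hy : y - d • (M *ᵥ y) = b • u) : y = (b / a) • x := by
  refine eq_of_sub_smul_mulVec_eq hd hM ?_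
  rw [hy, mulVec_smul, smul_comm d, ← smul_sub, hx, smul_smul, div_mul_cancel₀ b ha]

variable [DecidableEq ι]

theorem sum_abs_pow_mulVec_le (hM : ∀ j, ∑ i, |M i j| ≤ 1) (x : ι → ℝ) (k : ℕ) :
    ∑ i, |(M ^ k *ᵥ x) i| ≤ ∑ i, |x i| := by
  induction k with
  | zero => simp
  | succ k ih =>
    rw [pow_succ', ← mulVec_mulVec]
    exact (sum_abs_mulVec_le hM _).trans ih

theorem summable_pow_smul_pow_mulVec {d : ℝ} (hd : |d| < 1) (hM : ∀ j, ∑ i, |M i j| ≤ 1)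
    (x : ι → ℝ) : Summable fun k : ℕ => d ^ k • (M ^ k *ᵥ x) := by
  refine Summable.of_norm_bounded
    ((summable_geometric_of_lt_one (abs_nonneg d) hd).mul_right (∑ i, |x i|)) fun k => ?_
  rw [norm_smul, norm_pow, Real.norm_eq_abs]
  refine mul_le_mul_of_nonneg_left ((pi_norm_le_iff_of_nonneg (by positivity)).mpr fun i => ?_)
    (by positivity)
  rw [Real.norm_eq_abs]
  exact (Finset.single_le_sum (fun j _ => abs_nonneg ((M ^ k *ᵥ x) j)) (Finset.mem_univ i)).trans
    (sum_abs_pow_mulVec_le hM x k)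

theorem tsum_pow_smul_pow_mulVec_eq {d : ℝ} {x : ι → ℝ}
    (hs : Summable fun k : ℕ => d ^ k • (M ^ k *ᵥ x)) :
    ∑' k : ℕ, d ^ k • (M ^ k *ᵥ x) = x + d • (M *ᵥ ∑' k : ℕ, d ^ k • (M ^ k *ᵥ x)) := by
  let L : (ι → ℝ) →L[ℝ] ι → ℝ := LinearMap.toContinuousLinearMap (d • M.mulVecLin)
  have hshift : ∀ k : ℕ, L (d ^ k • (M ^ k *ᵥ x)) = d ^ (k + 1) • (M ^ (k + 1) *ᵥ x) :=
    fun k => by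
      change d • (M *ᵥ _) = _
      rw [mulVec_smul, mulVec_mulVec, smul_smul, ← pow_succ', ← pow_succ']
  change _ = x + L _
  rw [L.map_tsum hs, tsum_congr hshift, hs.tsum_eq_zero_add]
  simp

end ContractionL1

section DanglingCompletion

variable {ι : Type*} [Fintype ι] {P : Matrix ι ι ℝ}

noncomputable def danglingCompletion (P : Matrix ι ι ℝ) (v : ι → ℝ) : Matrix ι ι ℝ :=
  of fun i j => if ∑ k, P k j = 0 then v i else P i j

theorem sum_abs_le_one_of_colSum (hP : ∀ i j, 0 ≤ P i j)
    (hcol : ∀ j, ∑ i, P i j = 1 ∨ ∑ i, P i j = 0) (j : ι) : ∑ i, |P i j| ≤ 1 := by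
  rw [Finset.sum_congr rfl fun i _ => abs_of_nonneg (hP i j)]
  rcases hcol j with h | h <;> norm_num [h]

theorem sum_abs_danglingCompletion_le {v : ι → ℝ} (hv : ∑ i, |v i| ≤ 1)
    (hP : ∀ j, ∑ i, |P i j| ≤ 1) (j : ι) : ∑ i, |danglingCompletion P v i j| ≤ 1 := by
  by_cases h : ∑ k, P k j = 0 <;> simp [danglingCompletion, h, hv, hP j]

/-- `σ(x - P x)` is the mass of `x` on the zero columns of `P`, which the completion
redistributes along `v`. -/
theorem danglingCompletion_mulVec (hP : ∀ i j, 0 ≤ P i j)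
    (hcol : ∀ j, ∑ i, P i j = 1 ∨ ∑ i, P i j = 0) (v x : ι → ℝ) :
    danglingCompletion P v *ᵥ x = P *ᵥ x + (∑ i, (x - P *ᵥ x) i) • v := by
  have hσ : ∑ i, (x - P *ᵥ x) i = ∑ j, (1 - ∑ i, P i j) * x j := by
    simp only [Pi.sub_apply, Finset.sum_sub_distrib, sum_mulVec_eq_sum_mul_colSum, sub_mul,
      one_mul]
  ext a
  simp only [hσ, danglingCompletion, mulVec, dotProduct, of_apply, Pi.add_apply,
    Pi.smul_apply, smul_eq_mul, Finset.sum_mul, ← Finset.sum_add_distrib]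
  refine Finset.sum_congr rfl fun j _ => ?_
  rcases hcol j with h | h
  · simp [h]
  · have hPaj : P a j = 0 :=
      (Finset.sum_eq_zero_iff_of_nonneg fun i _ => hP i j).mp h a (Finset.mem_univ a)
    simp [h, hPaj, mul_comm]

end DanglingCompletion

end Matrix

/-- for `0 < d < 1` and `P_g` nonnegative with column sums in `{0, 1}`,
let `P̄_g` be the column-stochastic completion of `P_g` (zero columns replaced by `e`),
`f1 = 1 - σ(P_g e)`, `F0 = d P_g e - d σ(P_g e) e`, `H = ∑ d^k P_g^k F0`,
`H' = ∑ d^k P̄_g^k F0`, `f2 = σ(H' - P_g H')` and `f = f1 + f2`. Then both series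
converge and `H' + e = ((1 - d + d f) / (1 - d + d f1)) • (H + e)`. -/
theorem statement12 {N : ℕ} (hN : 1 ≤ N) (d : ℝ) (hd0 : 0 < d) (hd1 : d < 1)
    (Pg : Matrix (Fin N) (Fin N) ℝ) (hPgnn : ∀ a b, 0 ≤ Pg a b)
    (hcol : ∀ b, (∑ a, Pg a b = 1) ∨ (∑ a, Pg a b = 0)) :
    let e : Fin N → ℝ := fun _ => 1 / N
    let Pbar : Matrix (Fin N) (Fin N) ℝ :=
      Matrix.of fun a b => if (∑ c, Pg c b) = 0 then e a else Pg a b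
    let f1 : ℝ := 1 - ∑ a, (Pg *ᵥ e) a
    let F0 : Fin N → ℝ := d • (Pg *ᵥ e) - (d * ∑ a, (Pg *ᵥ e) a) • e
    Summable (fun k : ℕ => d ^ k • ((Pg ^ k) *ᵥ F0)) ∧
      Summable (fun k : ℕ => d ^ k • ((Pbar ^ k) *ᵥ F0)) ∧
        (let H : Fin N → ℝ := ∑' k : ℕ, d ^ k • ((Pg ^ k) *ᵥ F0)
         let H' : Fin N → ℝ := ∑' k : ℕ, d ^ k • ((Pbar ^ k) *ᵥ F0)
         let f2 : ℝ := ∑ a, (H' - Pg *ᵥ H') a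
         let f : ℝ := f1 + f2
         H' + e = ((1 - d + d * f) / (1 - d + d * f1)) • (H + e)) := by
  intro e Pbar f1 F0
  have he : ∑ i, |e i| = 1 := by
    have : (N : ℝ) ≠ 0 := by positivity
    simp [e, this]
  have hd : |d| < 1 := abs_lt.mpr ⟨by linarith, hd1⟩
  have hPg : ∀ j, ∑ i, |Pg i j| ≤ 1 := sum_abs_le_one_of_colSum hPgnn hcol
  have hPbar : ∀ j, ∑ i, |Pbar i j| ≤ 1 := sum_abs_danglingCompletion_le he.le hPg
  have hsPg := summable_pow_smul_pow_mulVec hd hPg F0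
  have hsPbar := summable_pow_smul_pow_mulVec hd hPbar F0
  refine ⟨hsPg, hsPbar, ?_⟩
  intro H H' f2 f
  set s := ∑ i, (Pg *ᵥ e) i
  have hF0 : F0 = d • (Pg *ᵥ e) - (d * s) • e := rfl
  have hds : 1 - d * s ≠ 0 := by
    have hs : |s| ≤ 1 :=
      (Finset.abs_sum_le_sum_abs _ _).trans ((sum_abs_mulVec_le hPg e).trans he.le)
    nlinarith [le_abs_self s]
  have hshift : ∀ x c, x - d • (Pg *ᵥ x) = F0 + c • e →
      (x + e) - d • (Pg *ᵥ (x + e)) = (1 - d * s + c) • e := by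
    intro x c hx
    rw [mulVec_add]
    linear_combination (norm := module) hx + hF0
  have hH : H - d • (Pg *ᵥ H) = F0 + (0 : ℝ) • e := by
    rw [zero_smul, add_zero]
    exact sub_eq_of_eq_add (tsum_pow_smul_pow_mulVec_eq hsPg)
  have hH' : H' - d • (Pg *ᵥ H') = F0 + (d * f2) • e := by
    have hfix : H' = F0 + d • (danglingCompletion Pg e *ᵥ H') :=
      tsum_pow_smul_pow_mulVec_eq hsPbar
    rw [danglingCompletion_mulVec hPgnn hcol] at hfix
    change H' = F0 + d • (Pg *ᵥ H' + f2 • e) at hfix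
    linear_combination (norm := module) hfix
  rw [show (1 - d + d * f) / (1 - d + d * f1) = (1 - d * s + d * f2) / (1 - d * s + 0) by
    simp only [f, f1]; ring]
  exact eq_div_smul_of_sub_smul_mulVec_eq hd hPg (by simpa using hds) (hshift H 0 hH)
    (hshift H' _ hH')
end
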